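/- Let P₁, …, P_k be probability measures on ℝ with finite second moments and quantile functions F₁⁻¹, …, F_k⁻¹. For any probability measure J on ℝ^k whose i-th coordinate marginal is P_i for every i, Σ_{1 ≤ i < j ≤ k} ∫ (y_i − y_j)² dJ(y) ≥ Σ_{1 ≤ i < j ≤ k} ∫₀¹ (F_i⁻¹(u) − F_j⁻¹(u))² du, and equality holds for the quantile coupling, the pushforward of Lebesgue measure on (0,1) under u ↦ (F₁⁻¹(u), …, F_k⁻¹(u)). That is, the quantile process minimizes the quadratic causal effect ψ(J) = Σ_{i<j} E_J[(Y_i − Y_j)²] over all joint laws with the given marginals. -/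

import Mathlib

open MeasureTheory Set Filter

/-- The cumulative distribution function of a measure on ℝ. -/
noncomputable def cdf (P : MeasureTheory.Measure ℝ) (y : ℝ) : ℝ := (P (Set.Iic y)).toReal

/-- The quantile function (generalized inverse cdf) of a measure on ℝ. -/
noncomputable def quantile (P : MeasureTheory.Measure ℝ) (u : ℝ) : ℝ :=
  sInf {y : ℝ | u ≤ cdf P y}

/-!
By Hoeffding's identity `x y = ∫∫ (1[s < x] - 1[s < 0]) (1[t < y] - 1[t < 0]) ds dt`, the mixed
moment `∫ x y dπ` of a coupling `π` of `P` and `Q` is `∫∫ π(X > s, Y > t) ds dt` plus terms that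
depend only on the marginals. The Fréchet bound `π(X > s, Y > t) ≤ min (P(X > s)) (Q(Y > t))` is
attained by the quantile coupling `u ↦ (F_P⁻¹(u), F_Q⁻¹(u))`, which therefore maximises the mixed
moment and so minimises `∫ (x - y)² dπ = ∫ x² dP + ∫ y² dQ - 2 ∫ x y dπ`, for every pair `i < j`
at once. For `J` the quantile coupling itself, the equality is a change of variables.
-/

open scoped Topology

instance : IsProbabilityMeasure (volume.restrict (Ioo (0 : ℝ) 1)) :=
  ⟨by simp [Real.volume_Ioo]⟩

section Quantile

variable (P : Measure ℝ) [IsProbabilityMeasure P]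

theorem cdf_eq_cdf : cdf P = ProbabilityTheory.cdf P := by
  funext y
  rw [ProbabilityTheory.cdf_eq_real, cdf, measureReal_def]

theorem monotone_cdf : Monotone (cdf P) := by
  simpa only [cdf_eq_cdf] using ProbabilityTheory.monotone_cdf P

theorem nonempty_le_cdf {u : ℝ} (hu : u < 1) : {y : ℝ | u ≤ cdf P y}.Nonempty := by
  rw [cdf_eq_cdf]
  obtain ⟨y, hy⟩ := ((ProbabilityTheory.tendsto_cdf_atTop P).eventually_const_lt hu).exists
  exact ⟨y, hy.le⟩

theorem bddBelow_le_cdf {u : ℝ} (hu : 0 < u) : BddBelow {y : ℝ | u ≤ cdf P y} := by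
  rw [cdf_eq_cdf]
  obtain ⟨y₀, hy₀⟩ := ((ProbabilityTheory.tendsto_cdf_atBot P).eventually_lt_const hu).exists
  refine ⟨y₀, fun y hy => le_of_not_gt fun hlt => ?_⟩
  exact (hy.trans (ProbabilityTheory.monotone_cdf P hlt.le)).not_gt hy₀

theorem quantile_le_iff {u : ℝ} (hu : u ∈ Ioo (0 : ℝ) 1) (y : ℝ) :
    quantile P u ≤ y ↔ u ≤ cdf P y := by
  refine ⟨fun h => ?_, fun h => csInf_le (bddBelow_le_cdf P hu.1) h⟩
  refine le_trans ?_ (monotone_cdf P h)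
  -- the infimum is attained because the cdf is right-continuous
  have hright : Tendsto (cdf P) (𝓝[>] quantile P u) (𝓝 (cdf P (quantile P u))) := by
    rw [cdf_eq_cdf]
    exact ((ProbabilityTheory.cdf P).right_continuous _).mono Ioi_subset_Ici_self
  refine ge_of_tendsto hright (eventually_nhdsWithin_of_forall fun x hx => ?_)
  obtain ⟨y', hy', hy'x⟩ := exists_lt_of_csInf_lt (nonempty_le_cdf P hu.2) hx
  exact hy'.trans (monotone_cdf P hy'x.le)

theorem lt_quantile_iff {u : ℝ} (hu : u ∈ Ioo (0 : ℝ) 1) (y : ℝ) :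
    y < quantile P u ↔ cdf P y < u := by
  simpa only [not_le] using (quantile_le_iff P hu y).not

theorem monotoneOn_quantile : MonotoneOn (quantile P) (Ioo 0 1) :=
  fun _ hu _ hv huv => csInf_le_csInf (bddBelow_le_cdf P hu.1) (nonempty_le_cdf P hv.2)
    fun _ hy => huv.trans hy

theorem aemeasurable_quantile : AEMeasurable (quantile P) (volume.restrict (Ioo 0 1)) :=
  aemeasurable_restrict_of_monotoneOn measurableSet_Ioo (monotoneOn_quantile P)

theorem map_quantile : (volume.restrict (Ioo 0 1)).map (quantile P) = P := by
  have := Measure.isProbabilityMeasure_map (aemeasurable_quantile P)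
  refine Measure.ext_of_Iic _ _ fun y => ?_
  have hpre : quantile P ⁻¹' Iic y ∩ Ioo 0 1 = Ioo 0 1 ∩ Iic (cdf P y) := by
    ext u
    simp only [mem_inter_iff, mem_preimage, mem_Iic]
    exact ⟨fun ⟨h, hu⟩ => ⟨hu, (quantile_le_iff P hu y).1 h⟩,
      fun ⟨hu, h⟩ => ⟨(quantile_le_iff P hu y).2 h, hu⟩⟩
  have hcdf : cdf P y ≤ 1 := by rw [cdf_eq_cdf]; exact ProbabilityTheory.cdf_le_one P y
  rw [Measure.map_apply_of_aemeasurable (aemeasurable_quantile P) measurableSet_Iic,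
    Measure.restrict_apply' measurableSet_Ioo, hpre,
    measure_congr ((Ioo_ae_eq_Ioc (μ := volume)).inter (ae_eq_refl (Iic (cdf P y)))),
    Ioc_inter_Iic, min_eq_right hcdf, Real.volume_Ioc, sub_zero, cdf,
    ENNReal.ofReal_toReal (measure_ne_top P _)]

theorem measure_Ioi_eq_ofReal_one_sub_cdf (s : ℝ) :
    P (Ioi s) = ENNReal.ofReal (1 - cdf P s) := by
  rw [← compl_Iic, prob_compl_eq_one_sub measurableSet_Iic, cdf,
    ENNReal.ofReal_sub _ ENNReal.toReal_nonneg, ENNReal.ofReal_one,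
    ENNReal.ofReal_toReal (measure_ne_top P _)]

end Quantile

noncomputable def quantileCoupling (P Q : Measure ℝ) : Measure (ℝ × ℝ) :=
  (volume.restrict (Ioo 0 1)).map fun u => (quantile P u, quantile Q u)

section QuantileCoupling

variable (P Q : Measure ℝ) [IsProbabilityMeasure P] [IsProbabilityMeasure Q]

theorem aemeasurable_quantile_prod :
    AEMeasurable (fun u => (quantile P u, quantile Q u)) (volume.restrict (Ioo 0 1)) :=
  (aemeasurable_quantile P).prodMk (aemeasurable_quantile Q)

instance : IsProbabilityMeasure (quantileCoupling P Q) :=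
  Measure.isProbabilityMeasure_map (aemeasurable_quantile_prod P Q)

theorem map_fst_quantileCoupling : (quantileCoupling P Q).map Prod.fst = P := by
  rw [quantileCoupling, AEMeasurable.map_map_of_aemeasurable measurable_fst.aemeasurable
    (aemeasurable_quantile_prod P Q)]
  exact map_quantile P

theorem map_snd_quantileCoupling : (quantileCoupling P Q).map Prod.snd = Q := by
  rw [quantileCoupling, AEMeasurable.map_map_of_aemeasurable measurable_snd.aemeasurable
    (aemeasurable_quantile_prod P Q)]
  exact map_quantile Q

theorem quantileCoupling_Ioi_prod_Ioi (s t : ℝ) :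
    quantileCoupling P Q (Ioi s ×ˢ Ioi t) = min (P (Ioi s)) (Q (Ioi t)) := by
  have hpre : (fun u => (quantile P u, quantile Q u)) ⁻¹' (Ioi s ×ˢ Ioi t) ∩ Ioo 0 1
      = Ioo (max (cdf P s) (cdf Q t)) 1 := by
    ext u
    simp only [mem_inter_iff, mem_preimage, mem_prod, mem_Ioi, mem_Ioo, max_lt_iff]
    refine ⟨fun ⟨⟨hs, ht⟩, hu⟩ => ⟨⟨(lt_quantile_iff P hu s).1 hs, (lt_quantile_iff Q hu t).1 ht⟩,
      hu.2⟩, fun ⟨⟨hs, ht⟩, hu⟩ => ?_⟩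
    have hu' : u ∈ Ioo (0 : ℝ) 1 := ⟨ENNReal.toReal_nonneg.trans_lt hs, hu⟩
    exact ⟨⟨(lt_quantile_iff P hu' s).2 hs, (lt_quantile_iff Q hu' t).2 ht⟩, hu'⟩
  rw [quantileCoupling, Measure.map_apply_of_aemeasurable (aemeasurable_quantile_prod P Q)
      (measurableSet_Ioi.prod measurableSet_Ioi), Measure.restrict_apply' measurableSet_Ioo, hpre,
    Real.volume_Ioo, measure_Ioi_eq_ofReal_one_sub_cdf, measure_Ioi_eq_ofReal_one_sub_cdf,
    ← ENNReal.ofReal_min, min_sub_sub_left]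

theorem measure_Ioi_prod_Ioi_le_quantileCoupling {π : Measure (ℝ × ℝ)}
    (hπ₁ : π.map Prod.fst = P) (hπ₂ : π.map Prod.snd = Q) (s t : ℝ) :
    π (Ioi s ×ˢ Ioi t) ≤ quantileCoupling P Q (Ioi s ×ˢ Ioi t) := by
  rw [quantileCoupling_Ioi_prod_Ioi, le_min_iff, ← hπ₁, ← hπ₂,
    Measure.map_apply measurable_fst measurableSet_Ioi,
    Measure.map_apply measurable_snd measurableSet_Ioi]
  exact ⟨measure_mono fun z hz => hz.1, measure_mono fun z hz => hz.2⟩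

end QuantileCoupling

noncomputable def hoeffdingKernel (x s : ℝ) : ℝ :=
  (if s < x then 1 else 0) - if s < 0 then 1 else 0

theorem measurable_hoeffdingKernel : Measurable (Function.uncurry hoeffdingKernel) :=
  (Measurable.ite (measurableSet_lt measurable_snd measurable_fst) measurable_const
    measurable_const).sub
  (Measurable.ite (measurableSet_lt measurable_snd measurable_const) measurable_const
    measurable_const)

theorem hoeffdingKernel_eq_indicator_sub_indicator (x : ℝ) :
    hoeffdingKernel x = (Ico 0 x).indicator 1 - (Ico x 0).indicator 1 := by
  funext s
  simp only [hoeffdingKernel, Pi.sub_apply, indicator_apply, mem_Ico, Pi.one_apply]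
  split_ifs <;> grind

theorem abs_hoeffdingKernel_eq_indicator_add_indicator (x : ℝ) :
    (fun s => |hoeffdingKernel x s|) = (Ico 0 x).indicator 1 + (Ico x 0).indicator 1 := by
  funext s
  simp only [hoeffdingKernel, Pi.add_apply, indicator_apply, mem_Ico, Pi.one_apply]
  split_ifs <;> grind

theorem integrable_indicator_Ico_one (a b : ℝ) : Integrable ((Ico a b).indicator (1 : ℝ → ℝ)) :=
  (integrable_indicator_iff measurableSet_Ico).2 (integrableOn_const measure_Ico_lt_top.ne)

theorem integrable_hoeffdingKernel (x : ℝ) : Integrable (hoeffdingKernel x) := by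
  rw [hoeffdingKernel_eq_indicator_sub_indicator]
  exact (integrable_indicator_Ico_one 0 x).sub (integrable_indicator_Ico_one x 0)

theorem integral_hoeffdingKernel (x : ℝ) : ∫ s, hoeffdingKernel x s = x := by
  rw [hoeffdingKernel_eq_indicator_sub_indicator, integral_sub' (integrable_indicator_Ico_one 0 x)
    (integrable_indicator_Ico_one x 0), integral_indicator_one measurableSet_Ico,
    integral_indicator_one measurableSet_Ico, Real.volume_real_Ico, Real.volume_real_Ico,
    sub_zero, zero_sub, max_zero_sub_max_neg_zero_eq_self]

theorem integral_abs_hoeffdingKernel (x : ℝ) : ∫ s, |hoeffdingKernel x s| = |x| := by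
  rw [abs_hoeffdingKernel_eq_indicator_add_indicator, integral_add'
    (integrable_indicator_Ico_one 0 x) (integrable_indicator_Ico_one x 0),
    integral_indicator_one measurableSet_Ico, integral_indicator_one measurableSet_Ico,
    Real.volume_real_Ico, Real.volume_real_Ico, sub_zero, zero_sub,
    max_zero_add_max_neg_zero_eq_abs_self]

theorem integral_hoeffdingKernel_mul (x y : ℝ) :
    ∫ st : ℝ × ℝ, hoeffdingKernel x st.1 * hoeffdingKernel y st.2 = x * y := by
  rw [Measure.volume_eq_prod, integral_prod_mul, integral_hoeffdingKernel,
    integral_hoeffdingKernel]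

theorem integrable_hoeffdingKernel_mul_prod {μ : Measure (ℝ × ℝ)} [SFinite μ]
    (h : Integrable (fun z : ℝ × ℝ => z.1 * z.2) μ) :
    Integrable (Function.uncurry fun (z st : ℝ × ℝ) =>
      hoeffdingKernel z.1 st.1 * hoeffdingKernel z.2 st.2) (μ.prod volume) := by
  have hmeas : Measurable (Function.uncurry fun (z st : ℝ × ℝ) =>
      hoeffdingKernel z.1 st.1 * hoeffdingKernel z.2 st.2) :=
    (measurable_hoeffdingKernel.comp (measurable_fst.fst.prodMk measurable_snd.fst)).mul
      (measurable_hoeffdingKernel.comp (measurable_fst.snd.prodMk measurable_snd.snd))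
  refine (integrable_prod_iff hmeas.aestronglyMeasurable).2 ⟨ae_of_all _ fun z => ?_, ?_⟩
  · rw [Measure.volume_eq_prod]
    exact (integrable_hoeffdingKernel z.1).mul_prod (integrable_hoeffdingKernel z.2)
  · refine h.norm.congr (ae_of_all _ fun z => ?_)
    simp only [Function.uncurry_apply_pair, norm_mul, Real.norm_eq_abs]
    rw [Measure.volume_eq_prod, integral_prod_mul (fun s => |hoeffdingKernel z.1 s|)
      (fun t => |hoeffdingKernel z.2 t|), integral_abs_hoeffdingKernel,
      integral_abs_hoeffdingKernel]

theorem integral_mul_eq_integral_integral_hoeffdingKernel {μ : Measure (ℝ × ℝ)} [SFinite μ]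
    (h : Integrable (fun z : ℝ × ℝ => z.1 * z.2) μ) :
    ∫ z, z.1 * z.2 ∂μ =
      ∫ st : ℝ × ℝ, ∫ z, hoeffdingKernel z.1 st.1 * hoeffdingKernel z.2 st.2 ∂μ := by
  calc ∫ z, z.1 * z.2 ∂μ
      = ∫ z : ℝ × ℝ, (∫ st : ℝ × ℝ, hoeffdingKernel z.1 st.1 * hoeffdingKernel z.2 st.2) ∂μ :=
        integral_congr_ae (ae_of_all _ fun z : ℝ × ℝ => (integral_hoeffdingKernel_mul z.1 z.2).symm)
    _ = ∫ st : ℝ × ℝ, ∫ z : ℝ × ℝ, hoeffdingKernel z.1 st.1 * hoeffdingKernel z.2 st.2 ∂μ :=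
        integral_integral_swap (integrable_hoeffdingKernel_mul_prod h)

theorem integral_hoeffdingKernel_mul_hoeffdingKernel (π : Measure (ℝ × ℝ))
    [IsProbabilityMeasure π] (s t : ℝ) :
    ∫ z, hoeffdingKernel z.1 s * hoeffdingKernel z.2 t ∂π =
      π.real (Ioi s ×ˢ Ioi t) - (if t < 0 then 1 else 0) * (π.map Prod.fst).real (Ioi s)
        - (if s < 0 then 1 else 0) * (π.map Prod.snd).real (Ioi t)
        + (if s < 0 then 1 else 0) * (if t < 0 then 1 else 0) := by
  set cs : ℝ := if s < 0 then 1 else 0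
  set ct : ℝ := if t < 0 then 1 else 0
  have hR : MeasurableSet (Ioi s ×ˢ Ioi t) := measurableSet_Ioi.prod measurableSet_Ioi
  have hA : MeasurableSet (Prod.fst ⁻¹' Ioi s : Set (ℝ × ℝ)) := measurable_fst measurableSet_Ioi
  have hB : MeasurableSet (Prod.snd ⁻¹' Ioi t : Set (ℝ × ℝ)) := measurable_snd measurableSet_Ioi
  have hind {C : Set (ℝ × ℝ)} (hC : MeasurableSet C) : Integrable (C.indicator (1 : ℝ × ℝ → ℝ)) π :=
    (integrable_const (1 : ℝ)).indicator hC
  have hexpand : ∀ z : ℝ × ℝ, hoeffdingKernel z.1 s * hoeffdingKernel z.2 t =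
      (Ioi s ×ˢ Ioi t).indicator 1 z - ct * (Prod.fst ⁻¹' Ioi s).indicator 1 z
        - cs * (Prod.snd ⁻¹' Ioi t).indicator 1 z + cs * ct := by
    intro z
    simp only [hoeffdingKernel, cs, ct, indicator_apply, mem_prod, mem_Ioi, Pi.one_apply]
    split_ifs <;> simp_all
  have h₁ : Integrable (fun z => (Ioi s ×ˢ Ioi t).indicator 1 z
      - ct * (Prod.fst ⁻¹' Ioi s).indicator 1 z) π := (hind hR).sub ((hind hA).const_mul ct)
  have h₂ : Integrable (fun z => (Ioi s ×ˢ Ioi t).indicator 1 z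
      - ct * (Prod.fst ⁻¹' Ioi s).indicator 1 z - cs * (Prod.snd ⁻¹' Ioi t).indicator 1 z) π :=
    h₁.sub ((hind hB).const_mul cs)
  rw [integral_congr_ae (ae_of_all _ hexpand), integral_add h₂ (integrable_const _),
    integral_sub h₁ ((hind hB).const_mul cs), integral_sub (hind hR) ((hind hA).const_mul ct),
    integral_const_mul, integral_const_mul, integral_indicator_one hR, integral_indicator_one hA,
    integral_indicator_one hB, integral_const, map_measureReal_apply measurable_fst
      measurableSet_Ioi, map_measureReal_apply measurable_snd measurableSet_Ioi]
  simp

theorem integral_mul_le_of_measure_Ioi_prod_Ioi_le {π π' : Measure (ℝ × ℝ)}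
    [IsProbabilityMeasure π] [IsProbabilityMeasure π']
    (h₁ : π.map Prod.fst = π'.map Prod.fst) (h₂ : π.map Prod.snd = π'.map Prod.snd)
    (hπ : Integrable (fun z : ℝ × ℝ => z.1 * z.2) π)
    (hπ' : Integrable (fun z : ℝ × ℝ => z.1 * z.2) π')
    (htail : ∀ s t, π (Ioi s ×ˢ Ioi t) ≤ π' (Ioi s ×ˢ Ioi t)) :
    ∫ z, z.1 * z.2 ∂π ≤ ∫ z, z.1 * z.2 ∂π' := by
  rw [integral_mul_eq_integral_integral_hoeffdingKernel hπ,
    integral_mul_eq_integral_integral_hoeffdingKernel hπ']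
  refine integral_mono (integrable_hoeffdingKernel_mul_prod hπ).integral_prod_right
    (integrable_hoeffdingKernel_mul_prod hπ').integral_prod_right fun st => ?_
  have hle : π.real (Ioi st.1 ×ˢ Ioi st.2) ≤ π'.real (Ioi st.1 ×ˢ Ioi st.2) :=
    ENNReal.toReal_mono (measure_ne_top π' _) (htail st.1 st.2)
  simp only [integral_hoeffdingKernel_mul_hoeffdingKernel, h₁, h₂]
  linarith

theorem integrable_sq_comp {α : Type*} [MeasurableSpace α] {μ : Measure α} {f : α → ℝ}
    (hf : Measurable f) (h : Integrable (fun x => x ^ 2) (μ.map f)) :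
    Integrable (fun a => f a ^ 2) μ :=
  (integrable_map_measure (by fun_prop) hf.aemeasurable).1 h

theorem integral_sq_comp {α : Type*} [MeasurableSpace α] {μ : Measure α} {f : α → ℝ}
    (hf : Measurable f) : ∫ a, f a ^ 2 ∂μ = ∫ x, x ^ 2 ∂(μ.map f) :=
  (integral_map hf.aemeasurable (continuous_pow 2).aestronglyMeasurable).symm

theorem integrable_fst_mul_snd {μ : Measure (ℝ × ℝ)}
    (h₁ : Integrable (fun z : ℝ × ℝ => z.1 ^ 2) μ) (h₂ : Integrable (fun z : ℝ × ℝ => z.2 ^ 2) μ) :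
    Integrable (fun z : ℝ × ℝ => z.1 * z.2) μ :=
  (h₁.add h₂).mono' (by fun_prop) (ae_of_all _ fun z => by
    rw [norm_mul, Real.norm_eq_abs, Real.norm_eq_abs, Pi.add_apply]
    nlinarith [sq_abs z.1, sq_abs z.2, sq_nonneg (|z.1| - |z.2|)])

theorem integral_sub_sq {μ : Measure (ℝ × ℝ)}
    (h₁ : Integrable (fun z : ℝ × ℝ => z.1 ^ 2) μ) (h₂ : Integrable (fun z : ℝ × ℝ => z.2 ^ 2) μ) :
    ∫ z, (z.1 - z.2) ^ 2 ∂μ =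
      ∫ z, z.1 ^ 2 ∂μ + ∫ z, z.2 ^ 2 ∂μ - 2 * ∫ z, z.1 * z.2 ∂μ := by
  have hadd : Integrable (fun z : ℝ × ℝ => z.1 ^ 2 + z.2 ^ 2) μ := h₁.add h₂
  calc ∫ z, (z.1 - z.2) ^ 2 ∂μ = ∫ z, (z.1 ^ 2 + z.2 ^ 2) - 2 * (z.1 * z.2) ∂μ := by
        congr 1 with z
        ring
    _ = _ := by
        rw [integral_sub hadd ((integrable_fst_mul_snd h₁ h₂).const_mul 2), integral_add h₁ h₂,
          integral_const_mul]

theorem integral_sub_sq_le_of_measure_Ioi_prod_Ioi_le {π π' : Measure (ℝ × ℝ)}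
    [IsProbabilityMeasure π] [IsProbabilityMeasure π']
    (h₁ : π.map Prod.fst = π'.map Prod.fst) (h₂ : π.map Prod.snd = π'.map Prod.snd)
    (hsq₁ : Integrable (fun x => x ^ 2) (π.map Prod.fst))
    (hsq₂ : Integrable (fun x => x ^ 2) (π.map Prod.snd))
    (htail : ∀ s t, π (Ioi s ×ˢ Ioi t) ≤ π' (Ioi s ×ˢ Ioi t)) :
    ∫ z, (z.1 - z.2) ^ 2 ∂π' ≤ ∫ z, (z.1 - z.2) ^ 2 ∂π := by
  have hπ₁ := integrable_sq_comp measurable_fst hsq₁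
  have hπ₂ := integrable_sq_comp measurable_snd hsq₂
  have hπ'₁ := integrable_sq_comp measurable_fst (h₁ ▸ hsq₁)
  have hπ'₂ := integrable_sq_comp measurable_snd (h₂ ▸ hsq₂)
  have hmixed := integral_mul_le_of_measure_Ioi_prod_Ioi_le h₁ h₂
    (integrable_fst_mul_snd hπ₁ hπ₂) (integrable_fst_mul_snd hπ'₁ hπ'₂) htail
  rw [integral_sub_sq hπ₁ hπ₂, integral_sub_sq hπ'₁ hπ'₂, integral_sq_comp (μ := π) measurable_fst,
    integral_sq_comp (μ := π) measurable_snd, integral_sq_comp (μ := π') measurable_fst,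
    integral_sq_comp (μ := π') measurable_snd, h₁, h₂]
  linarith

theorem integral_quantile_sub_sq_le (P Q : Measure ℝ) [IsProbabilityMeasure P]
    [IsProbabilityMeasure Q] (hP : Integrable (fun x => x ^ 2) P)
    (hQ : Integrable (fun x => x ^ 2) Q) {π : Measure (ℝ × ℝ)} [IsProbabilityMeasure π]
    (hπ₁ : π.map Prod.fst = P) (hπ₂ : π.map Prod.snd = Q) :
    ∫ u in Ioo 0 1, (quantile P u - quantile Q u) ^ 2 ≤ ∫ z, (z.1 - z.2) ^ 2 ∂π := by
  have hcoupling : ∫ u in Ioo 0 1, (quantile P u - quantile Q u) ^ 2 =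
      ∫ z, (z.1 - z.2) ^ 2 ∂quantileCoupling P Q :=
    (integral_map (f := fun z : ℝ × ℝ => (z.1 - z.2) ^ 2) (aemeasurable_quantile_prod P Q)
      (by fun_prop)).symm
  rw [hcoupling]
  exact integral_sub_sq_le_of_measure_Ioi_prod_Ioi_le
    (hπ₁.trans (map_fst_quantileCoupling P Q).symm) (hπ₂.trans (map_snd_quantileCoupling P Q).symm)
    (hπ₁ ▸ hP) (hπ₂ ▸ hQ) (measure_Ioi_prod_Ioi_le_quantileCoupling P Q hπ₁ hπ₂)

theorem integral_quantile_sub_sq_le_integral_sub_sq {ι : Type*} (P Q : Measure ℝ)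
    [IsProbabilityMeasure P] [IsProbabilityMeasure Q] (hP : Integrable (fun x => x ^ 2) P)
    (hQ : Integrable (fun x => x ^ 2) Q) {J : Measure (ι → ℝ)} [IsProbabilityMeasure J] {i j : ι}
    (hi : J.map (fun y => y i) = P) (hj : J.map (fun y => y j) = Q) :
    ∫ u in Ioo 0 1, (quantile P u - quantile Q u) ^ 2 ≤ ∫ y, (y i - y j) ^ 2 ∂J := by
  have hij : Measurable fun y : ι → ℝ => (y i, y j) := by fun_prop
  have := Measure.isProbabilityMeasure_map (μ := J) hij.aemeasurable
  have hπ₁ : (J.map fun y => (y i, y j)).map Prod.fst = P := by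
    rw [Measure.map_map measurable_fst hij]
    exact hi
  have hπ₂ : (J.map fun y => (y i, y j)).map Prod.snd = Q := by
    rw [Measure.map_map measurable_snd hij]
    exact hj
  calc ∫ u in Ioo 0 1, (quantile P u - quantile Q u) ^ 2
      ≤ ∫ z, (z.1 - z.2) ^ 2 ∂J.map fun y => (y i, y j) :=
        integral_quantile_sub_sq_le P Q hP hQ hπ₁ hπ₂
    _ = ∫ y, (y i - y j) ^ 2 ∂J := integral_map hij.aemeasurable (by fun_prop)

/-- The quantile coupling minimizes the quadratic causal effect
ψ(J) = Σ_{i<j} E_J[(Y_i − Y_j)²] over all joint laws with the given marginals. -/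
theorem quantile_coupling_minimizes_quadratic_effect
    (k : ℕ) (P : Fin k → Measure ℝ) [∀ i, IsProbabilityMeasure (P i)]
    (hm : ∀ i, Integrable (fun y : ℝ => y ^ 2) (P i))
    (J : Measure (Fin k → ℝ)) [IsProbabilityMeasure J]
    (hmarg : ∀ i, J.map (fun y => y i) = P i) :
    ((∑ p ∈ Finset.univ.filter (fun p : Fin k × Fin k => p.1 < p.2),
        ∫ u in Ioo (0:ℝ) 1, (quantile (P p.1) u - quantile (P p.2) u) ^ 2)
      ≤ ∑ p ∈ Finset.univ.filter (fun p : Fin k × Fin k => p.1 < p.2),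
          ∫ y, (y p.1 - y p.2) ^ 2 ∂J) ∧
    (J = (volume.restrict (Ioo (0:ℝ) 1)).map (fun u i => quantile (P i) u) →
      (∑ p ∈ Finset.univ.filter (fun p : Fin k × Fin k => p.1 < p.2),
          ∫ y, (y p.1 - y p.2) ^ 2 ∂J)
        = ∑ p ∈ Finset.univ.filter (fun p : Fin k × Fin k => p.1 < p.2),
            ∫ u in Ioo (0:ℝ) 1, (quantile (P p.1) u - quantile (P p.2) u) ^ 2) := by
  refine ⟨Finset.sum_le_sum fun p _ => integral_quantile_sub_sq_le_integral_sub_sq _ _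
    (hm p.1) (hm p.2) (hmarg p.1) (hmarg p.2), fun hJ => Finset.sum_congr rfl fun p _ => ?_⟩
  have hquantiles : AEMeasurable (fun u i => quantile (P i) u) (volume.restrict (Ioo 0 1)) :=
    aemeasurable_pi_lambda _ fun i => aemeasurable_quantile (P i)
  rw [hJ, integral_map hquantiles (by fun_prop)]
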